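/- Let p : ℤ → ℝ be a probability mass function that is symmetric (p_e = p_{−e}) and unimodal (p_e ≥ p_{e+1} for all e ≥ 0), let d : ℤ → ℝ be bounded, even, with d(0) = 0 and nondecreasing on nonnegative integers, and fix a ∈ ℤ, λ > 0, β ∈ (0,1). Let V be the unique bounded fixed point of the Bellman operator (TV)(e) = min{ (1−β)λ + β Σ_{w∈ℤ} p_w V(w), (1−β)d(e) + β Σ_{w∈ℤ} p_w V(ae+w) }. Then: (i) V(e) ≤ λ for all e ∈ ℤ; (ii) V(0) = β Σ_{w∈ℤ} p_w V(w); and (iii) 0 ≤ V(e) − V(0) ≤ (1−β)λ for all e ∈ ℤ. -/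

import Mathlib

/-!
Write `S = Σ_w p_w V(w)`. The transmit branch gives `V(e) ≤ (1-β)λ + βS`; averaging against `p`
yields `S ≤ λ`, and at `e = 0` the wait branch is exactly `βS`, which is the smaller one. The
lower bound `V(e) ≥ βS = V(0)` needs `Σ_w p_w V(ae+w) ≥ Σ_w p_w V(w)`, true because `V` is
nondecreasing in `|e|`. That property is inherited from value iteration: the Bellman operator is a
`β`-contraction, so its iterates from `0` converge to `V`, and it preserves monotonicity in `|e|`
because, for `p` symmetric unimodal and `f` nondecreasing in `|e|`, the average `Σ_w p_w f(c+w)`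
grows with `|c|`; this is seen by pairing `u` with its reflection `c + c' - u`.
-/

open Filter Topology Set

def AbsMono {α : Type*} [Preorder α] (f : ℤ → α) : Prop :=
  ∀ ⦃x y : ℤ⦄, |x| ≤ |y| → f x ≤ f y

def AbsAnti {α : Type*} [Preorder α] (f : ℤ → α) : Prop :=
  ∀ ⦃x y : ℤ⦄, |x| ≤ |y| → f y ≤ f x

section AbsMono

variable {α : Type*} {f : ℤ → α}

theorem AbsMono.apply_neg [PartialOrder α] (hf : AbsMono f) (x : ℤ) : f (-x) = f x :=
  le_antisymm (hf (abs_neg x).le) (hf (abs_neg x).ge)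

theorem AbsAnti.apply_neg [PartialOrder α] (hf : AbsAnti f) (x : ℤ) : f (-x) = f x :=
  AbsMono.apply_neg (α := αᵒᵈ) hf x

theorem absMono_of_even_of_monotoneOn [Preorder α] (heven : ∀ x, f (-x) = f x)
    (hf : MonotoneOn f (Ici 0)) : AbsMono f := by
  have habs : ∀ x, f |x| = f x := fun x => by
    rcases abs_choice x with h | h <;> rw [h]
    exact heven x
  intro x y h
  rw [← habs x, ← habs y]
  exact hf (abs_nonneg x) (abs_nonneg y) h

theorem absAnti_of_even_of_antitoneOn [Preorder α] (heven : ∀ x, f (-x) = f x)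
    (hf : AntitoneOn f (Ici 0)) : AbsAnti f :=
  absMono_of_even_of_monotoneOn (α := αᵒᵈ) heven hf

theorem absAnti_of_even_of_succ_le [Preorder α] (heven : ∀ x, f (-x) = f x)
    (hf : ∀ x, 0 ≤ x → f (x + 1) ≤ f x) : AbsAnti f :=
  absAnti_of_even_of_antitoneOn heven <| antitoneOn_of_succ_le ordConnected_Ici
    fun x _ hx _ => by simpa [Order.succ_eq_add_one] using hf x hx

theorem absMono_of_tendsto [TopologicalSpace α] [Preorder α] [OrderClosedTopology α]
    {ι : Type*} {l : Filter ι} [l.NeBot] {F : ι → ℤ → α} (hF : ∀ i, AbsMono (F i))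
    (h : ∀ e, Tendsto (F · e) l (𝓝 (f e))) : AbsMono f :=
  fun x y hxy => le_of_tendsto_of_tendsto' (h x) (h y) fun i => hF i hxy

end AbsMono

section WeightedSum

variable {ι : Type*} {p h g : ι → ℝ} {C K : ℝ}

theorem summable_mul_of_abs_le (hp0 : ∀ i, 0 ≤ p i) (hp : Summable p) (hh : ∀ i, |h i| ≤ C) :
    Summable fun i => p i * h i :=
  .of_norm_bounded (hp.mul_right C) fun i => by
    rw [Real.norm_eq_abs, abs_mul, abs_of_nonneg (hp0 i)]
    exact mul_le_mul_of_nonneg_left (hh i) (hp0 i)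

theorem tsum_mul_le_of_le (hp0 : ∀ i, 0 ≤ p i) (hp1 : HasSum p 1) (hh : ∀ i, |h i| ≤ C)
    {c : ℝ} (hc : ∀ i, h i ≤ c) : ∑' i, p i * h i ≤ c :=
  calc ∑' i, p i * h i ≤ ∑' i, p i * c :=
        Summable.tsum_le_tsum (fun i => mul_le_mul_of_nonneg_left (hc i) (hp0 i))
          (summable_mul_of_abs_le hp0 hp1.summable hh) (hp1.summable.mul_right c)
    _ = c := by rw [tsum_mul_right, hp1.tsum_eq, one_mul]

theorem le_tsum_mul_of_le (hp0 : ∀ i, 0 ≤ p i) (hp1 : HasSum p 1) (hh : ∀ i, |h i| ≤ C)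
    {c : ℝ} (hc : ∀ i, c ≤ h i) : c ≤ ∑' i, p i * h i := by
  have := tsum_mul_le_of_le hp0 hp1 (h := -h) (by simpa using hh) (c := -c)
    (fun i => neg_le_neg (hc i))
  simpa [tsum_neg] using this

theorem abs_tsum_mul_le (hp0 : ∀ i, 0 ≤ p i) (hp1 : HasSum p 1) (hh : ∀ i, |h i| ≤ C) :
    |∑' i, p i * h i| ≤ C :=
  abs_le.2 ⟨le_tsum_mul_of_le hp0 hp1 hh fun i => (abs_le.1 (hh i)).1,
    tsum_mul_le_of_le hp0 hp1 hh fun i => (abs_le.1 (hh i)).2⟩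

theorem abs_tsum_mul_sub_tsum_mul_le (hp0 : ∀ i, 0 ≤ p i) (hp1 : HasSum p 1)
    (hg : ∀ i, |g i| ≤ C) (hhg : ∀ i, |h i - g i| ≤ K) :
    |∑' i, p i * h i - ∑' i, p i * g i| ≤ K := by
  have hh : ∀ i, |h i| ≤ K + C := fun i => by
    linarith [abs_sub_abs_le_abs_sub (h i) (g i), hhg i, hg i]
  rw [← (summable_mul_of_abs_le hp0 hp1.summable hh).tsum_sub
    (summable_mul_of_abs_le hp0 hp1.summable hg)]
  simp_rw [← mul_sub]
  exact abs_tsum_mul_le hp0 hp1 hhg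

theorem tsum_nonneg_of_add_comp_equiv_nonneg (σ : ι ≃ ι) (hg : Summable g)
    (h : ∀ i, 0 ≤ g i + g (σ i)) : 0 ≤ ∑' i, g i := by
  have hdouble : ∑' i, (g i + g (σ i)) = 2 * ∑' i, g i := by
    rw [hg.tsum_add (f := g) (g := fun i => g (σ i)) (σ.summable_iff.2 hg), σ.tsum_eq g]
    ring
  have hsum_nonneg : 0 ≤ ∑' i, (g i + g (σ i)) := tsum_nonneg h
  linarith

end WeightedSum

section Rearrangement

variable {p f : ℤ → ℝ} {C : ℝ}

theorem tsum_mul_comp_add (p f : ℤ → ℝ) (c : ℤ) :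
    ∑' w, p w * f (c + w) = ∑' u, p (u - c) * f u := by
  rw [← (Equiv.addLeft c).tsum_eq (fun u => p (u - c) * f u)]
  simp

theorem mul_sub_comp_reflect_nonneg (hp : AbsAnti p) (hf : AbsMono f) {c c' : ℤ} (hc : 0 ≤ c)
    (hcc' : c ≤ c') (u : ℤ) : 0 ≤ (p (u - c') - p (u - c)) * (f u - f (c + c' - u)) := by
  rcases le_total (2 * u) (c + c') with hu | hu
  · exact mul_nonneg_of_nonpos_of_nonpos (sub_nonpos.2 (hp (sq_le_sq.1 (by nlinarith))))
      (sub_nonpos.2 (hf (sq_le_sq.1 (by nlinarith))))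
  · exact mul_nonneg (sub_nonneg.2 (hp (sq_le_sq.1 (by nlinarith))))
      (sub_nonneg.2 (hf (sq_le_sq.1 (by nlinarith))))

theorem tsum_mul_comp_add_le_of_le (hp0 : ∀ n, 0 ≤ p n) (hps : Summable p) (hp : AbsAnti p)
    (hfC : ∀ e, |f e| ≤ C) (hf : AbsMono f) {c c' : ℤ} (hc : 0 ≤ c) (hcc' : c ≤ c') :
    ∑' w, p w * f (c + w) ≤ ∑' w, p w * f (c' + w) := by
  have hsum : ∀ b : ℤ, Summable fun u => p (u - b) * f u := fun b =>
    summable_mul_of_abs_le (p := fun u => p (u - b)) (fun _ => hp0 _)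
      ((Equiv.subRight b).summable_iff.2 hps) hfC
  rw [tsum_mul_comp_add, tsum_mul_comp_add, ← sub_nonneg, ← (hsum c').tsum_sub (hsum c)]
  refine tsum_nonneg_of_add_comp_equiv_nonneg (Equiv.subLeft (c + c')) ((hsum c').sub (hsum c))
    fun u => ?_
  convert mul_sub_comp_reflect_nonneg hp hf hc hcc' u using 1
  simp only [Equiv.subLeft_apply]
  rw [show c + c' - u - c' = -(u - c) by ring, show c + c' - u - c = -(u - c') by ring,
    hp.apply_neg, hp.apply_neg]
  ring

theorem tsum_mul_comp_add_le_of_abs_le (hp0 : ∀ n, 0 ≤ p n) (hps : Summable p) (hp : AbsAnti p)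
    (hfC : ∀ e, |f e| ≤ C) (hf : AbsMono f) {c c' : ℤ} (h : |c| ≤ |c'|) :
    ∑' w, p w * f (c + w) ≤ ∑' w, p w * f (c' + w) := by
  have habs : ∀ b : ℤ, ∑' w, p w * f (b + w) = ∑' w, p w * f (|b| + w) := fun b => by
    rcases abs_choice b with hb | hb <;> rw [hb]
    rw [← (Equiv.neg ℤ).tsum_eq (fun w => p w * f (-b + w))]
    refine tsum_congr fun w => ?_
    rw [Equiv.neg_apply, hp.apply_neg, ← neg_add, hf.apply_neg]
  rw [habs c, habs c']
  exact tsum_mul_comp_add_le_of_le hp0 hps hp hfC hf (abs_nonneg c) h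

end Rearrangement

noncomputable def bellman (p d : ℤ → ℝ) (a : ℤ) (lam β : ℝ) (f : ℤ → ℝ) (e : ℤ) : ℝ :=
  min ((1 - β) * lam + β * ∑' w, p w * f w) ((1 - β) * d e + β * ∑' w, p w * f (a * e + w))

section Bellman

variable {p d : ℤ → ℝ} {a : ℤ} {lam β : ℝ}

theorem abs_bellman_sub_le (hp0 : ∀ n, 0 ≤ p n) (hp1 : HasSum p 1) (hβ : 0 ≤ β)
    {f g : ℤ → ℝ} {C K : ℝ} (hg : ∀ e, |g e| ≤ C) (hfg : ∀ e, |f e - g e| ≤ K) (e : ℤ) :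
    |bellman p d a lam β f e - bellman p d a lam β g e| ≤ β * K := by
  have hshift : ∀ c : ℤ, |β * ∑' w, p w * f (c + w) - β * ∑' w, p w * g (c + w)| ≤ β * K :=
    fun c => by
      rw [← mul_sub, abs_mul, abs_of_nonneg hβ]
      exact mul_le_mul_of_nonneg_left
        (abs_tsum_mul_sub_tsum_mul_le hp0 hp1 (fun _ => hg _) fun _ => hfg _) hβ
  refine (abs_min_sub_min_le_max _ _ _ _).trans (max_le ?_ ?_)
  · simpa using hshift 0
  · simpa using hshift (a * e)

theorem abs_iterate_bellman_sub_le (hp0 : ∀ n, 0 ≤ p n) (hp1 : HasSum p 1) (hβ : 0 ≤ β)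
    {V : ℤ → ℝ} {C : ℝ} (hV : bellman p d a lam β V = V) (hC : ∀ e, |V e| ≤ C) (n : ℕ) (e : ℤ) :
    |(bellman p d a lam β)^[n] 0 e - V e| ≤ β ^ n * C := by
  induction n generalizing e with
  | zero => simpa using hC e
  | succ n ih =>
    rw [Function.iterate_succ_apply', ← congrFun hV e, pow_succ', mul_assoc]
    exact abs_bellman_sub_le hp0 hp1 hβ hC ih e

theorem absMono_bellman (hp0 : ∀ n, 0 ≤ p n) (hps : Summable p) (hp : AbsAnti p)
    (hd : AbsMono d) (hβ0 : 0 ≤ β) (hβ1 : β ≤ 1) {f : ℤ → ℝ} {C : ℝ} (hfC : ∀ e, |f e| ≤ C)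
    (hf : AbsMono f) : AbsMono (bellman p d a lam β f) := fun x y hxy =>
  have hax : |a * x| ≤ |a * y| := by
    rw [abs_mul, abs_mul]
    exact mul_le_mul_of_nonneg_left hxy (abs_nonneg a)
  min_le_min le_rfl <| add_le_add (mul_le_mul_of_nonneg_left (hd hxy) (sub_nonneg.2 hβ1)) <|
    mul_le_mul_of_nonneg_left (tsum_mul_comp_add_le_of_abs_le hp0 hps hp hfC hf hax) hβ0

theorem absMono_of_bellman_eq_self (hp0 : ∀ n, 0 ≤ p n) (hp1 : HasSum p 1) (hp : AbsAnti p)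
    (hd : AbsMono d) (hβ0 : 0 ≤ β) (hβ1 : β < 1) {V : ℤ → ℝ} {C : ℝ}
    (hV : bellman p d a lam β V = V) (hC : ∀ e, |V e| ≤ C) : AbsMono V := by
  set W : ℕ → ℤ → ℝ := fun n => (bellman p d a lam β)^[n] 0
  have hdist : ∀ n e, |W n e - V e| ≤ β ^ n * C := abs_iterate_bellman_sub_le hp0 hp1 hβ0 hV hC
  have hW_bdd : ∀ n e, |W n e| ≤ 2 * C := fun n e => by
    have hC0 : 0 ≤ C := (abs_nonneg _).trans (hC e)
    have : β ^ n * C ≤ C := mul_le_of_le_one_left hC0 (pow_le_one₀ hβ0 hβ1.le)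
    linarith [abs_sub_abs_le_abs_sub (W n e) (V e), hdist n e, hC e]
  have hW_mono : ∀ n, AbsMono (W n) := fun n => by
    induction n with
    | zero => exact fun _ _ _ => le_rfl
    | succ n ih =>
      simp only [W, Function.iterate_succ_apply']
      exact absMono_bellman hp0 hp1.summable hp hd hβ0 hβ1.le (hW_bdd n) ih
  have hβC : Tendsto (fun n => β ^ n * C) atTop (𝓝 0) := by
    simpa using (tendsto_pow_atTop_nhds_zero_of_lt_one hβ0 hβ1).mul_const C
  refine absMono_of_tendsto (l := atTop) hW_mono fun e => tendsto_iff_dist_tendsto_zero.2 ?_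
  exact squeeze_zero (fun _ => dist_nonneg) (fun n => (Real.dist_eq _ _).trans_le (hdist n e)) hβC

end Bellman

theorem stmt_7_general (p : ℤ → ℝ) (hp_nonneg : ∀ n, 0 ≤ p n) (hp_sum : HasSum p 1)
    (hp_sym : ∀ e : ℤ, p (-e) = p e)
    (hp_unimodal : ∀ e : ℤ, 0 ≤ e → p (e + 1) ≤ p e)
    (d : ℤ → ℝ) (hd_even : ∀ e : ℤ, d (-e) = d e)
    (hd0 : d 0 = 0)
    (hd_mono : ∀ e₁ e₂ : ℤ, 0 ≤ e₂ → e₂ ≤ e₁ → d e₂ ≤ d e₁)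
    (a : ℤ) (lam : ℝ) (hlam : 0 < lam) (β : ℝ) (hβ : β ∈ Set.Ioo (0 : ℝ) 1)
    (V : ℤ → ℝ) (hV_bdd : ∃ C, ∀ e, |V e| ≤ C)
    (hV : ∀ e : ℤ, V e =
      min ((1 - β) * lam + β * ∑' w : ℤ, p w * V w)
          ((1 - β) * d e + β * ∑' w : ℤ, p w * V (a * e + w))) :
    (∀ e : ℤ, V e ≤ lam) ∧
    (V 0 = β * ∑' w : ℤ, p w * V w) ∧
    (∀ e : ℤ, 0 ≤ V e - V 0 ∧ V e - V 0 ≤ (1 - β) * lam) := by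
  obtain ⟨hβ0, hβ1⟩ := hβ
  obtain ⟨C, hC⟩ := hV_bdd
  have hp : AbsAnti p := absAnti_of_even_of_succ_le hp_sym hp_unimodal
  have hd : AbsMono d :=
    absMono_of_even_of_monotoneOn hd_even fun _ he₂ _ _ h => hd_mono _ _ he₂ h
  have hVmono : AbsMono V := absMono_of_bellman_eq_self hp_nonneg hp_sum hp hd hβ0.le hβ1
    (funext fun e => (hV e).symm) hC
  set S := ∑' w : ℤ, p w * V w
  have htransmit : 0 ≤ (1 - β) * lam := mul_nonneg (sub_nonneg.2 hβ1.le) hlam.le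
  have hV_le : ∀ e, V e ≤ (1 - β) * lam + β * S := fun e => (hV e).trans_le (min_le_left _ _)
  have hS : S ≤ lam := by
    have := tsum_mul_le_of_le hp_nonneg hp_sum hC hV_le
    nlinarith
  have hV0 : V 0 = β * S := by
    rw [hV 0]
    simp only [hd0, mul_zero, zero_add]
    exact min_eq_right (le_add_of_nonneg_left htransmit)
  have hV_ge : ∀ e, β * S ≤ V e := fun e => by
    have hde : 0 ≤ d e := hd0 ▸ hd (by simp)
    have hshift : S ≤ ∑' w : ℤ, p w * V (a * e + w) := by
      simpa using tsum_mul_comp_add_le_of_abs_le hp_nonneg hp_sum.summable hp hC hVmono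
        (c := 0) (c' := a * e) (by simpa using abs_nonneg (a * e))
    rw [hV e]
    exact le_min (le_add_of_nonneg_left htransmit) (le_add_of_nonneg_of_le
      (mul_nonneg (sub_nonneg.2 hβ1.le) hde) (mul_le_mul_of_nonneg_left hshift hβ0.le))
  refine ⟨fun e => by nlinarith [hV_le e], hV0, fun e => ⟨?_, ?_⟩⟩ <;>
    linarith [hV_ge e, hV_le e]

/-- SEN-type bounds for the unique bounded fixed point of the Bellman
operator: `V ≤ λ`, `V(0) = β Σ_w p_w V(w)`, and `0 ≤ V(e) - V(0) ≤ (1-β)λ`. -/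
theorem stmt_7 (p : ℤ → ℝ) (hp_nonneg : ∀ n, 0 ≤ p n) (hp_sum : HasSum p 1)
    (hp_sym : ∀ e : ℤ, p (-e) = p e)
    (hp_unimodal : ∀ e : ℤ, 0 ≤ e → p (e + 1) ≤ p e)
    (d : ℤ → ℝ) (hd_bdd : ∃ C, ∀ e, |d e| ≤ C) (hd_even : ∀ e : ℤ, d (-e) = d e)
    (hd0 : d 0 = 0)
    (hd_mono : ∀ e₁ e₂ : ℤ, 0 ≤ e₂ → e₂ ≤ e₁ → d e₂ ≤ d e₁)
    (a : ℤ) (lam : ℝ) (hlam : 0 < lam) (β : ℝ) (hβ : β ∈ Set.Ioo (0 : ℝ) 1)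
    (V : ℤ → ℝ) (hV_bdd : ∃ C, ∀ e, |V e| ≤ C)
    (hV : ∀ e : ℤ, V e =
      min ((1 - β) * lam + β * ∑' w : ℤ, p w * V w)
          ((1 - β) * d e + β * ∑' w : ℤ, p w * V (a * e + w))) :
    (∀ e : ℤ, V e ≤ lam) ∧
    (V 0 = β * ∑' w : ℤ, p w * V w) ∧
    (∀ e : ℤ, 0 ≤ V e - V 0 ∧ V e - V 0 ≤ (1 - β) * lam) :=
  stmt_7_general p hp_nonneg hp_sum hp_sym hp_unimodal d hd_even hd0 hd_mono a lam hlam β hβ V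
    hV_bdd hV
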